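/- arXiv:2505.19521 — 2 statements merged into one kernel-verified Lean document; each statement's English description precedes it below -/
import Mathlib

section
/- Let H be a real inner product space, F : ℝ → H differentiable on [0, ∞), and λ > 0, δ ≥ 0 constants such that ⟪F(t), F'(t)⟫ ≤ −λ · ‖F(t)‖² + δ · ‖F(t)‖ for all t ≥ 0. Then for all t ≥ 0, ‖F(t)‖ ≤ ‖F(0)‖ · exp(−λ · t / 2) + δ / λ. -/
/-!
The energy `‖F‖²` has right derivative `2⟪F, F'⟫`. Completing the square,
`2δ‖F‖ ≤ λ‖F‖² + δ²/λ`, so the dissipation inequality becomes the linear differential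
inequality `(‖F‖²)' ≤ -λ‖F‖² + δ²/λ`. Grönwall's inequality bounds the energy by
`‖F 0‖² e^{-λt} + (δ/λ)²`, and `√(b² + c²) ≤ b + c` gives the claim.
-/

open Set Real

theorem two_mul_mul_le_mul_sq_add_sq_div {K : ℝ} (hK : 0 < K) (a x : ℝ) :
    2 * a * x ≤ K * x ^ 2 + a ^ 2 / K := by
  have hK0 : K ≠ 0 := hK.ne'
  calc 2 * a * x = K * x ^ 2 + a ^ 2 / K - K * (x - a / K) ^ 2 := by field_simp; ring
    _ ≤ K * x ^ 2 + a ^ 2 / K := sub_le_self _ (mul_nonneg hK.le (sq_nonneg _))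

theorem le_add_of_sq_le_sq_add_sq {a b c : ℝ} (hb : 0 ≤ b) (hc : 0 ≤ c)
    (h : a ^ 2 ≤ b ^ 2 + c ^ 2) : a ≤ b + c :=
  abs_le_of_sq_le_sq' (by nlinarith [mul_nonneg hb hc]) (by positivity) |>.2

theorem gronwallBound_neg_le {K : ℝ} (hK : 0 < K) (δ : ℝ) {ε : ℝ} (hε : 0 ≤ ε) (x : ℝ) :
    gronwallBound δ (-K) ε x ≤ δ * exp (-K * x) + ε / K := by
  rw [gronwallBound_of_K_ne_0 (neg_ne_zero.2 hK.ne')]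
  dsimp only
  rw [show ε / -K * (exp (-K * x) - 1) = ε / K * (1 - exp (-K * x)) by ring]
  gcongr
  exact mul_le_of_le_one_right (div_nonneg hε hK.le) (by linarith [exp_pos (-K * x)])

theorem le_gronwallBound_of_deriv_right_le {f f' : ℝ → ℝ} {δ K ε a b : ℝ}
    (hf : ContinuousOn f (Icc a b)) (hf' : ∀ x ∈ Ico a b, HasDerivWithinAt f (f' x) (Ici x) x)
    (ha : f a ≤ δ) (bound : ∀ x ∈ Ico a b, f' x ≤ K * f x + ε) :
    ∀ x ∈ Icc a b, f x ≤ gronwallBound δ K ε (x - a) :=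
  le_gronwallBound_of_liminf_deriv_right_le hf
    (fun x hx _ hr => (hf' x hx).liminf_right_slope_le hr) ha bound

theorem norm_sq_le_of_two_inner_deriv_le {H : Type*} [NormedAddCommGroup H]
    [InnerProductSpace ℝ H] {F F' : ℝ → H} {K ε a b : ℝ} (hK : 0 < K) (hε : 0 ≤ ε)
    (hF : ContinuousOn F (Icc a b)) (hF' : ∀ x ∈ Ico a b, HasDerivWithinAt F (F' x) (Ici x) x)
    (bound : ∀ x ∈ Ico a b, 2 * inner ℝ (F x) (F' x) ≤ -K * ‖F x‖ ^ 2 + ε) :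
    ∀ x ∈ Icc a b, ‖F x‖ ^ 2 ≤ ‖F a‖ ^ 2 * exp (-K * (x - a)) + ε / K := by
  intro x hx
  calc ‖F x‖ ^ 2 ≤ gronwallBound (‖F a‖ ^ 2) (-K) ε (x - a) :=
        le_gronwallBound_of_deriv_right_le (f := (‖F ·‖ ^ 2))
          (hF.norm.pow 2) (fun y hy => (hF' y hy).norm_sq) le_rfl bound x hx
    _ ≤ ‖F a‖ ^ 2 * exp (-K * (x - a)) + ε / K :=
        gronwallBound_neg_le hK _ hε _

/-- Convergence of the learning dynamics: if `F : ℝ → H` is differentiable on `[0, ∞)`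
in a real inner product space and satisfies the dissipation inequality
`⟪F(t), F'(t)⟫ ≤ −λ ‖F(t)‖² + δ ‖F(t)‖`, then
`‖F(t)‖ ≤ ‖F(0)‖ exp (−λ t / 2) + δ / λ` for all `t ≥ 0`. -/
theorem learning_convergence
    {H : Type*} [NormedAddCommGroup H] [InnerProductSpace ℝ H]
    (F F' : ℝ → H)
    (hF : ∀ t ∈ Set.Ici (0 : ℝ), HasDerivWithinAt F (F' t) (Set.Ici 0) t)
    (lam δ : ℝ) (hlam : 0 < lam) (hδ : 0 ≤ δ)
    (hineq : ∀ t ≥ (0 : ℝ),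
      (inner ℝ (F t) (F' t) : ℝ) ≤ -lam * ‖F t‖ ^ 2 + δ * ‖F t‖) :
    ∀ t ≥ (0 : ℝ), ‖F t‖ ≤ ‖F 0‖ * Real.exp (-lam * t / 2) + δ / lam := by
  intro t ht
  have hcont : ContinuousOn F (Icc 0 t) := fun s hs =>
    (hF s hs.1).continuousWithinAt.mono Icc_subset_Ici_self
  have hderiv : ∀ s ∈ Ico 0 t, HasDerivWithinAt F (F' s) (Ici s) s := fun s hs =>
    (hF s hs.1).mono (Ici_subset_Ici.2 hs.1)
  have henergy : ∀ s ∈ Ico 0 t,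
      2 * inner ℝ (F s) (F' s) ≤ -lam * ‖F s‖ ^ 2 + δ ^ 2 / lam := fun s hs => by
    linarith [hineq s hs.1, two_mul_mul_le_mul_sq_add_sq_div hlam δ ‖F s‖]
  refine le_add_of_sq_le_sq_add_sq (by positivity) (by positivity) ?_
  calc ‖F t‖ ^ 2 ≤ ‖F 0‖ ^ 2 * exp (-lam * (t - 0)) + δ ^ 2 / lam / lam :=
        norm_sq_le_of_two_inner_deriv_le hlam (by positivity) hcont hderiv henergy t ⟨ht, le_rfl⟩
    _ = (‖F 0‖ * exp (-lam * t / 2)) ^ 2 + (δ / lam) ^ 2 := by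
        rw [mul_pow, ← exp_nat_mul, sub_zero, div_div, div_pow, sq lam]
        ring_nf
end

section
/- Let X be a metric space, Y a real normed vector space, b : X × Y → ℝ with |b(x, y₁) − b(x, y₂)| ≤ L_b · ‖y₁ − y₂‖ for all x ∈ X, y₁, y₂ ∈ Y (L_b > 0), h : X → Y, x : ℝ → X a trajectory, and v : ℝ → Y with ‖v(t)‖ ≤ δ_v for all t ≥ 0, where δ_v > 0. Suppose K > 0, the nominal certificate c(t) := b(x(t), h(x(t))) is differentiable on [0, ∞) with c'(t) ≥ −K · c(t) for all t ≥ 0, c(0) = b₀ > 0, and L_b · δ_v < b₀. Then for every t with 0 ≤ t < (1/K) · log(b₀ / (L_b · δ_v)), one has b(x(t), h(x(t)) + v(t)) > 0. -/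
/-!
The nominal certificate `c` obeys `c' ≥ -K c`, so Grönwall's inequality applied to `-c` gives
`c t ≥ b₀ e^{-K t}`. The measurement noise moves the certificate by at most `L_b δ_v`, and
`b₀ e^{-K t} > L_b δ_v` is exactly the condition `t < (1/K) log (b₀ / (L_b δ_v))`.
-/

open Real Set Topology

theorem mul_exp_le_of_hasDerivWithinAt_ge_neg_mul {f f' : ℝ → ℝ} {K a : ℝ}
    (hf : ∀ t ∈ Ici a, HasDerivWithinAt f (f' t) (Ici a) t)
    (hf' : ∀ t ∈ Ici a, -K * f t ≤ f' t) :
    ∀ t ∈ Ici a, f a * exp (-K * (t - a)) ≤ f t := by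
  intro t ht
  have hcont : ContinuousOn (fun s => -f s) (Icc a t) := fun s hs =>
    ((hf s hs.1).continuousWithinAt.mono Icc_subset_Ici_self).neg
  have hderiv : ∀ s ∈ Ico a t, ∀ r, -f' s < r →
      ∃ᶠ z in 𝓝[>] s, (z - s)⁻¹ * (-f z - -f s) < r := fun s hs _ hr =>
    ((hf s hs.1).neg.mono (Ici_subset_Ici.mpr hs.1)).liminf_right_slope_le hr
  have hbound : ∀ s ∈ Ico a t, -f' s ≤ -K * -f s + 0 := fun s hs => by
    linarith [hf' s hs.1]
  have hgronwall :=
    le_gronwallBound_of_liminf_deriv_right_le hcont hderiv le_rfl hbound t ⟨ht, le_rfl⟩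
  rw [gronwallBound_ε0] at hgronwall
  linarith

theorem sub_mul_norm_le_of_abs_sub_le {X Y : Type*} [SeminormedAddCommGroup Y]
    {b : X → Y → ℝ} {L : ℝ} (hb : ∀ (x : X) (y₁ y₂ : Y), |b x y₁ - b x y₂| ≤ L * ‖y₁ - y₂‖)
    (x : X) (y w : Y) : b x y - L * ‖w‖ ≤ b x (y + w) := by
  have hlip := hb x (y + w) y
  rw [add_sub_cancel_left] at hlip
  linarith [neg_abs_le (b x (y + w) - b x y)]

theorem lt_mul_exp_neg_mul_of_lt_one_div_mul_log {q b₀ K t : ℝ} (hq : 0 < q) (hb₀ : 0 < b₀)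
    (hK : 0 < K) (ht : t < 1 / K * log (b₀ / q)) : q < b₀ * exp (-K * t) := by
  have hKt : K * t < log (b₀ / q) := by
    rwa [one_div_mul_eq_div, lt_div_iff₀' hK] at ht
  have hexp : exp (K * t) * q < b₀ :=
    (lt_div_iff₀ hq).mp ((lt_log_iff_exp_lt (div_pos hb₀ hq)).mp hKt)
  rw [neg_mul, exp_neg, ← div_eq_mul_inv, lt_div_iff₀ (exp_pos _)]
  linarith

theorem deterministic_safety_horizon_general
    {X : Type*} {Y : Type*} [NormedAddCommGroup Y]
    (b : X → Y → ℝ) (Lb : ℝ) (hLb : 0 < Lb)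
    (hbLip : ∀ (x : X) (y₁ y₂ : Y), |b x y₁ - b x y₂| ≤ Lb * ‖y₁ - y₂‖)
    (h : X → Y) (x : ℝ → X) (v : ℝ → Y)
    (δv : ℝ) (hδv : 0 < δv) (hv : ∀ t ≥ (0 : ℝ), ‖v t‖ ≤ δv)
    (K : ℝ) (hK : 0 < K) (c' : ℝ → ℝ)
    (hc : ∀ t ∈ Set.Ici (0 : ℝ),
      HasDerivWithinAt (fun s => b (x s) (h (x s))) (c' t) (Set.Ici 0) t)
    (hc' : ∀ t ≥ (0 : ℝ), c' t ≥ -K * b (x t) (h (x t)))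
    (b₀ : ℝ) (hb0 : b (x 0) (h (x 0)) = b₀) (hb₀pos : 0 < b₀) :
    ∀ t : ℝ, 0 ≤ t → t < (1 / K) * Real.log (b₀ / (Lb * δv)) →
      0 < b (x t) (h (x t) + v t) := by
  intro t ht htlt
  have hnominal : b₀ * exp (-K * t) ≤ b (x t) (h (x t)) := by
    simpa [hb0] using mul_exp_le_of_hasDerivWithinAt_ge_neg_mul hc hc' t ht
  have hhorizon : Lb * δv < b₀ * exp (-K * t) :=
    lt_mul_exp_neg_mul_of_lt_one_div_mul_log (mul_pos hLb hδv) hb₀pos hK htlt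
  have hnoise_t : Lb * ‖v t‖ ≤ Lb * δv := mul_le_mul_of_nonneg_left (hv t ht) hLb.le
  linarith [sub_mul_norm_le_of_abs_sub_le hbLip (x t) (h (x t)) (v t)]

/-- Deterministic safety under bounded measurement noise: if the barrier `b` is
`L_b`-Lipschitz in the measurement argument, the nominal certificate
`c(t) = b (x t) (h (x t))` satisfies `c' ≥ −K c` with `c 0 = b₀ > 0`, and the
measurement noise is bounded by `δ_v` with `L_b δ_v < b₀`, then the noisy certificate
`b (x t) (h (x t) + v t)` remains strictly positive for all
`0 ≤ t < (1/K) log (b₀ / (L_b δ_v))`. -/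
theorem deterministic_safety_horizon
    {X : Type*} {Y : Type*} [NormedAddCommGroup Y] [NormedSpace ℝ Y]
    (b : X → Y → ℝ) (Lb : ℝ) (hLb : 0 < Lb)
    (hbLip : ∀ (x : X) (y₁ y₂ : Y), |b x y₁ - b x y₂| ≤ Lb * ‖y₁ - y₂‖)
    (h : X → Y) (x : ℝ → X) (v : ℝ → Y)
    (δv : ℝ) (hδv : 0 < δv) (hv : ∀ t ≥ (0 : ℝ), ‖v t‖ ≤ δv)
    (K : ℝ) (hK : 0 < K) (c' : ℝ → ℝ)
    (hc : ∀ t ∈ Set.Ici (0 : ℝ),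
      HasDerivWithinAt (fun s => b (x s) (h (x s))) (c' t) (Set.Ici 0) t)
    (hc' : ∀ t ≥ (0 : ℝ), c' t ≥ -K * b (x t) (h (x t)))
    (b₀ : ℝ) (hb0 : b (x 0) (h (x 0)) = b₀) (hb₀pos : 0 < b₀)
    (hnoise : Lb * δv < b₀) :
    ∀ t : ℝ, 0 ≤ t → t < (1 / K) * Real.log (b₀ / (Lb * δv)) →
      0 < b (x t) (h (x t) + v t) :=
  deterministic_safety_horizon_general b Lb hLb hbLip h x v δv hδv hv K hK c' hc hc' b₀ hb0 hb₀pos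
end
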